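/- (Pullback of contraction metric, state version / Lemma 1) Let φ : ℝⁿ → ℝⁿ be a diffeomorphism with Jacobian Θ(x) = ∂φ/∂x, and let f' = φ_* f be the pushforward vector field, i.e., f'(φ(x), u) = Θ(x)f(x, u). If G is a contraction metric with respect to states with rate λ > 0 for the system ẏ = f'(y, u), then φ*G, defined by (φ*G)(x) = Θ(x)ᵀ G(φ(x)) Θ(x), is a contraction metric with respect to states with the same rate λ for the system ẋ = f(x, u). In particular, along any variational solution δξ of d/dt(δξ) = (∂f/∂x)δξ, one has d/dt⟨δξ, δξ⟩_{φ*G} ≤ −λ⟨δξ, δξ⟩_{φ*G}. -/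

import Mathlib

open Matrix

attribute [local instance] Matrix.frobeniusSeminormedAddCommGroup
  Matrix.frobeniusNormedAddCommGroup Matrix.frobeniusNormedSpace

/-- The pullback metric `(φ*G)(x) = Θ(x)ᵀ G(φ(x)) Θ(x)`. -/
def pullbackMetric {n : ℕ} (Θ G : (Fin n → ℝ) → Matrix (Fin n) (Fin n) ℝ)
    (φ : (Fin n → ℝ) → (Fin n → ℝ)) : (Fin n → ℝ) → Matrix (Fin n) (Fin n) ℝ :=
  fun x => (Θ x)ᵀ * G (φ x) * Θ x

attribute [local instance] Matrix.frobeniusNormedRing Matrix.frobeniusNormedAlgebra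

/-- `mulVec` as a continuous bilinear map. -/
noncomputable def mulVecL (n : ℕ) :
    Matrix (Fin n) (Fin n) ℝ →L[ℝ] (Fin n → ℝ) →L[ℝ] (Fin n → ℝ) :=
  LinearMap.toContinuousLinearMap
  { toFun := fun M => LinearMap.toContinuousLinearMap M.mulVecLin
    map_add' := fun M N => by ext v; simp [Matrix.add_mulVec]
    map_smul' := fun c M => by ext v; simp [Matrix.smul_mulVec] }

@[simp] lemma mulVecL_apply {n : ℕ} (M : Matrix (Fin n) (Fin n) ℝ) (v : Fin n → ℝ) :
    mulVecL n M v = M.mulVec v := rfl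

lemma mulVecL_eq {n : ℕ} (M : Matrix (Fin n) (Fin n) ℝ) :
    mulVecL n M = LinearMap.toContinuousLinearMap M.mulVecLin := rfl

/-- Continuous linear map turning a continuous linear endomorphism into its matrix. -/
noncomputable def matL (n : ℕ) :
    ((Fin n → ℝ) →L[ℝ] (Fin n → ℝ)) →L[ℝ] Matrix (Fin n) (Fin n) ℝ :=
  LinearMap.toContinuousLinearMap
    (LinearMap.toMatrix'.toLinearMap ∘ₗ ContinuousLinearMap.coeLM ℝ)

lemma matL_mulVecL {n : ℕ} (M : Matrix (Fin n) (Fin n) ℝ) :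
    matL n (LinearMap.toContinuousLinearMap M.mulVecLin) = M := by
  show LinearMap.toMatrix'
    ((LinearMap.toContinuousLinearMap M.mulVecLin : _ →L[ℝ] _) : _ →ₗ[ℝ] _) = M
  rw [LinearMap.coe_toContinuousLinearMap, ← Matrix.toLin'_apply', LinearMap.toMatrix'_toLin']

/-- Transpose as a continuous linear map. -/
noncomputable def transL (n : ℕ) :
    Matrix (Fin n) (Fin n) ℝ →L[ℝ] Matrix (Fin n) (Fin n) ℝ :=
  LinearMap.toContinuousLinearMap (Matrix.transposeLinearEquiv (Fin n) (Fin n) ℝ ℝ).toLinearMap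

@[simp] lemma transL_apply {n : ℕ} (M : Matrix (Fin n) (Fin n) ℝ) : transL n M = Mᵀ := rfl

lemma dot_trans {n : ℕ} (θ C : Matrix (Fin n) (Fin n) ℝ) (X v : Fin n → ℝ) :
    X ⬝ᵥ (θᵀ * C).mulVec v = (θ.mulVec X) ⬝ᵥ (C.mulVec v) := by
  rw [← Matrix.mulVec_mulVec, Matrix.dotProduct_mulVec (A := θᵀ), Matrix.vecMul_transpose]

lemma quad_algebra {n : ℕ} (θ g a a' B gd : Matrix (Fin n) (Fin n) ℝ) (X : Fin n → ℝ)
    (hB : B.mulVec X = a'.mulVec (θ.mulVec X) - θ.mulVec (a.mulVec X)) :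
    X ⬝ᵥ ((aᵀ * (θᵀ * g * θ) + θᵀ * g * θ * a +
      (θᵀ * g * B + (θᵀ * gd + Bᵀ * g) * θ)).mulVec X)
    = (θ.mulVec X) ⬝ᵥ ((a'ᵀ * g + g * a' + gd).mulVec (θ.mulVec X)) := by
  set Y := θ.mulVec X with hY
  have e1 : X ⬝ᵥ (aᵀ * (θᵀ * g * θ)).mulVec X = (θ.mulVec (a.mulVec X)) ⬝ᵥ g.mulVec Y := by
    rw [dot_trans a _ X X, mul_assoc, dot_trans θ _ _ X, ← Matrix.mulVec_mulVec]
  have e2 : X ⬝ᵥ (θᵀ * g * θ * a).mulVec X = Y ⬝ᵥ g.mulVec (θ.mulVec (a.mulVec X)) := by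
    rw [mul_assoc, mul_assoc, ← mul_assoc g θ a, dot_trans θ _ X X,
      ← Matrix.mulVec_mulVec, ← Matrix.mulVec_mulVec]
  have e3 : X ⬝ᵥ (θᵀ * g * B).mulVec X = Y ⬝ᵥ g.mulVec (B.mulVec X) := by
    rw [mul_assoc, dot_trans θ _ X X, ← Matrix.mulVec_mulVec]
  have e4 : X ⬝ᵥ (θᵀ * gd * θ).mulVec X = Y ⬝ᵥ gd.mulVec Y := by
    rw [mul_assoc, dot_trans θ _ X X, ← Matrix.mulVec_mulVec]
  have e5 : X ⬝ᵥ (Bᵀ * g * θ).mulVec X = (B.mulVec X) ⬝ᵥ g.mulVec Y := by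
    rw [mul_assoc, dot_trans B _ X X, ← Matrix.mulVec_mulVec]
  have r1 : Y ⬝ᵥ (a'ᵀ * g).mulVec Y = (a'.mulVec Y) ⬝ᵥ g.mulVec Y := dot_trans a' g Y Y
  have r2 : Y ⬝ᵥ (g * a').mulVec Y = Y ⬝ᵥ g.mulVec (a'.mulVec Y) := by
    rw [← Matrix.mulVec_mulVec]
  simp only [Matrix.add_mul, Matrix.add_mulVec, dotProduct_add, e1, e2, e3, e4, e5, r1, r2, hB,
    Matrix.mulVec_sub, dotProduct_sub, sub_dotProduct]
  ring

set_option maxHeartbeats 1000000 in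
lemma key_deriv {n : ℕ} {U : Type*} (f f' : (Fin n → ℝ) → U → (Fin n → ℝ))
    (φ : (Fin n → ℝ) → (Fin n → ℝ)) (hφ : ContDiff ℝ (⊤ : ℕ∞) φ)
    (Θ : (Fin n → ℝ) → Matrix (Fin n) (Fin n) ℝ)
    (hΘ : ∀ x, HasFDerivAt φ (LinearMap.toContinuousLinearMap (Θ x).mulVecLin) x)
    (hpush : ∀ x u, f' (φ x) u = (Θ x).mulVec (f x u))
    (A A' : (Fin n → ℝ) → U → Matrix (Fin n) (Fin n) ℝ)
    (hA : ∀ (u : U) (x), HasFDerivAt (fun z => f z u)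
      (LinearMap.toContinuousLinearMap (A x u).mulVecLin) x)
    (hA' : ∀ (u : U) (y), HasFDerivAt (fun z => f' z u)
      (LinearMap.toContinuousLinearMap (A' y u).mulVecLin) y)
    (G : (Fin n → ℝ) → Matrix (Fin n) (Fin n) ℝ)
    (GD : (Fin n → ℝ) → ((Fin n → ℝ) →L[ℝ] Matrix (Fin n) (Fin n) ℝ))
    (hGD : ∀ y, HasFDerivAt G (GD y) y) (x : Fin n → ℝ) :
    ∃ D : (Fin n → ℝ) →L[ℝ] Matrix (Fin n) (Fin n) ℝ,
      HasFDerivAt (pullbackMetric Θ G φ) D x ∧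
      ∀ (u : U) (X : Fin n → ℝ),
        X ⬝ᵥ (((A x u)ᵀ * pullbackMetric Θ G φ x + pullbackMetric Θ G φ x * A x u +
            D (f x u)).mulVec X)
        = ((Θ x).mulVec X) ⬝ᵥ
            (((A' (φ x) u)ᵀ * G (φ x) + G (φ x) * A' (φ x) u +
              GD (φ x) (f' (φ x) u)).mulVec ((Θ x).mulVec X)) := by
  -- Θ is differentiable
  have hdφ : ContDiff ℝ (⊤ : ℕ∞) (fderiv ℝ φ) := hφ.fderiv_right (by simp)
  set ΘD : (Fin n → ℝ) → ((Fin n → ℝ) →L[ℝ] Matrix (Fin n) (Fin n) ℝ) :=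
    fun z => (matL n).comp (fderiv ℝ (fderiv ℝ φ) z) with hΘDdef
  have hΘfun : (fun w => matL n (fderiv ℝ φ w)) = Θ := by
    funext w; rw [(hΘ w).fderiv, matL_mulVecL]
  have hΘD : ∀ z, HasFDerivAt Θ (ΘD z) z := by
    intro z
    have h1 : HasFDerivAt (fun w => matL n (fderiv ℝ φ w)) (ΘD z) z :=
      (matL n).hasFDerivAt.comp z ((hdφ.differentiable (by simp) z).hasFDerivAt)
    rwa [hΘfun] at h1
  -- symmetry of the second derivative of φ
  have hsymm : ∀ v w : Fin n → ℝ, (ΘD x v).mulVec w = (ΘD x w).mulVec v := by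
    intro v w
    have h2 : HasFDerivAt (fun z => mulVecL n (Θ z)) ((mulVecL n).comp (ΘD x)) x :=
      (mulVecL n).hasFDerivAt.comp x (hΘD x)
    have := second_derivative_symmetric (f := φ) (fun y => hΘ y) h2 v w
    simpa using this
  -- chain rule identity relating A, A', ΘD
  have hchain : ∀ (u : U) (v : Fin n → ℝ),
      (ΘD x v).mulVec (f x u)
        = (A' (φ x) u).mulVec ((Θ x).mulVec v) - (Θ x).mulVec ((A x u).mulVec v) := by
    intro u v
    have hL : HasFDerivAt (fun z => f' (φ z) u)
        ((LinearMap.toContinuousLinearMap (A' (φ x) u).mulVecLin).comp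
          (LinearMap.toContinuousLinearMap (Θ x).mulVecLin)) x :=
      (hA' u (φ x)).comp x (hΘ x)
    have hR : HasFDerivAt (fun z => (mulVecL n (Θ z)) (f z u))
        ((mulVecL n (Θ x)).comp (LinearMap.toContinuousLinearMap (A x u).mulVecLin) +
          ((mulVecL n).comp (ΘD x)).flip (f x u)) x :=
      HasFDerivAt.clm_apply ((mulVecL n).hasFDerivAt.comp x (hΘD x)) (hA u x)
    have heqfun : (fun z => f' (φ z) u) = fun z => (mulVecL n (Θ z)) (f z u) := by
      funext z; simp [hpush z u]
    rw [heqfun] at hL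
    have hDeq := hL.unique hR
    have := congrFun (congrArg (fun (L : (Fin n → ℝ) →L[ℝ] (Fin n → ℝ)) => (L : _ → _)) hDeq) v
    simp only [ContinuousLinearMap.coe_comp', Function.comp_apply,
      ContinuousLinearMap.add_apply, ContinuousLinearMap.flip_apply,
      LinearMap.coe_toContinuousLinearMap', Matrix.mulVecLin_apply, mulVecL_apply] at this
    rw [eq_sub_iff_add_eq, add_comm]
    exact this.symm
  -- derivative of the pullback metric
  have hgφ : HasFDerivAt (fun z => G (φ z))
      ((GD (φ x)).comp (LinearMap.toContinuousLinearMap (Θ x).mulVecLin)) x :=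
    (hGD (φ x)).comp x (hΘ x)
  have hΘt : HasFDerivAt (fun z => (Θ z)ᵀ) ((transL n).comp (ΘD x)) x :=
    (transL n).hasFDerivAt.comp x (hΘD x)
  have h12 := hΘt.mul' hgφ
  have hGp := h12.mul' (hΘD x)
  refine ⟨_, hGp, fun u X => ?_⟩
  have hB : (ΘD x (f x u)).mulVec X
      = (A' (φ x) u).mulVec ((Θ x).mulVec X) - (Θ x).mulVec ((A x u).mulVec X) := by
    rw [hsymm, hchain]
  have hDw : ((((fun z => (Θ z)ᵀ) * fun z => G (φ z)) x) • ΘD x +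
        MulOpposite.op (Θ x) • ((Θ x)ᵀ • ((GD (φ x)).comp (LinearMap.toContinuousLinearMap (Θ x).mulVecLin)) +
          MulOpposite.op (G (φ x)) • ((transL n).comp (ΘD x)))) (f x u)
      = (Θ x)ᵀ * G (φ x) * (ΘD x (f x u)) +
        ((Θ x)ᵀ * GD (φ x) (f' (φ x) u) + (ΘD x (f x u))ᵀ * G (φ x)) * Θ x := by
    simp only [ContinuousLinearMap.add_apply, ContinuousLinearMap.smul_apply,
      ContinuousLinearMap.smulRight_apply, ContinuousLinearMap.comp_apply,
      LinearMap.coe_toContinuousLinearMap', Matrix.mulVecLin_apply, transL_apply,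
      smul_eq_mul, Pi.mul_apply, MulOpposite.smul_eq_mul_unop, MulOpposite.unop_op]
    rw [← hpush x u]
  have hPm : pullbackMetric Θ G φ x = (Θ x)ᵀ * G (φ x) * Θ x := rfl
  rw [hPm]; erw [hDw]
  exact quad_algebra (Θ x) (G (φ x)) (A x u) (A' (φ x) u) (ΘD x (f x u))
    (GD (φ x) (f' (φ x) u)) X hB

/-- Dot product as a continuous bilinear map. -/
noncomputable def dotL (n : ℕ) : (Fin n → ℝ) →L[ℝ] (Fin n → ℝ) →L[ℝ] ℝ :=
  LinearMap.toContinuousLinearMap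
  { toFun := fun v => LinearMap.toContinuousLinearMap
      { toFun := fun w => v ⬝ᵥ w
        map_add' := fun a b => dotProduct_add v a b
        map_smul' := fun c a => by simp [dotProduct_smul] }
    map_add' := fun a b => by ext w; simp [add_dotProduct]
    map_smul' := fun c a => by ext w; simp [smul_dotProduct] }

@[simp] lemma dotL_apply {n : ℕ} (v w : Fin n → ℝ) : dotL n v w = v ⬝ᵥ w := rfl


set_option maxHeartbeats 1000000 in

/-- Pullback of a contraction metric (state version, Lemma 1): if `G` is a contraction
metric with rate `λ` for the pushforward system `ẏ = f'(y,u)`, where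
`f'(φ(x),u) = Θ(x) f(x,u)` and `Θ` is the Jacobian of the diffeomorphism `φ`, then
`φ*G` is a contraction metric with rate `λ` for `ẋ = f(x,u)`; in particular along any
variational solution `δξ`, `d/dt ⟨δξ,δξ⟩_{φ*G} ≤ −λ ⟨δξ,δξ⟩_{φ*G}`. -/
theorem pullback_contraction_metric_states
    (n : ℕ) (U : Type*) (lam : ℝ) (hlam : 0 < lam)
    (f f' : (Fin n → ℝ) → U → (Fin n → ℝ))
    (φ φinv : (Fin n → ℝ) → (Fin n → ℝ))
    (hφ : ContDiff ℝ (⊤ : ℕ∞) φ) (hφinv : ContDiff ℝ (⊤ : ℕ∞) φinv)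
    (hleft : Function.LeftInverse φinv φ) (hright : Function.RightInverse φinv φ)
    (Θ : (Fin n → ℝ) → Matrix (Fin n) (Fin n) ℝ)
    (hΘ : ∀ x, HasFDerivAt φ (LinearMap.toContinuousLinearMap (Θ x).mulVecLin) x)
    (hpush : ∀ x u, f' (φ x) u = (Θ x).mulVec (f x u))
    (A A' : (Fin n → ℝ) → U → Matrix (Fin n) (Fin n) ℝ)
    (hA : ∀ (u : U) (x), HasFDerivAt (fun z => f z u)
      (LinearMap.toContinuousLinearMap (A x u).mulVecLin) x)
    (hA' : ∀ (u : U) (y), HasFDerivAt (fun z => f' z u)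
      (LinearMap.toContinuousLinearMap (A' y u).mulVecLin) y)
    (G : (Fin n → ℝ) → Matrix (Fin n) (Fin n) ℝ)
    (hGpos : ∀ y, (G y).PosDef)
    (GD : (Fin n → ℝ) → ((Fin n → ℝ) →L[ℝ] Matrix (Fin n) (Fin n) ℝ))
    (hGD : ∀ y, HasFDerivAt G (GD y) y)
    (hcontr : ∀ (y : Fin n → ℝ) (u : U) (X : Fin n → ℝ),
      X ⬝ᵥ (((A' y u)ᵀ * G y + G y * A' y u + GD y (f' y u)).mulVec X) ≤
        -lam * (X ⬝ᵥ (G y).mulVec X)) :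
    (∀ x, (pullbackMetric Θ G φ x).PosDef) ∧
    (∀ GpD : (Fin n → ℝ) → ((Fin n → ℝ) →L[ℝ] Matrix (Fin n) (Fin n) ℝ),
      (∀ x, HasFDerivAt (pullbackMetric Θ G φ) (GpD x) x) →
      ∀ (x : Fin n → ℝ) (u : U) (X : Fin n → ℝ),
        X ⬝ᵥ (((A x u)ᵀ * pullbackMetric Θ G φ x + pullbackMetric Θ G φ x * A x u +
            GpD x (f x u)).mulVec X) ≤
          -lam * (X ⬝ᵥ (pullbackMetric Θ G φ x).mulVec X)) ∧
    (∀ (ξ δξ : ℝ → (Fin n → ℝ)) (υ : ℝ → U),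
      (∀ t, HasDerivAt ξ (f (ξ t) (υ t)) t) →
      (∀ t, HasDerivAt δξ ((A (ξ t) (υ t)).mulVec (δξ t)) t) →
      ∀ (t : ℝ) (D : ℝ),
        HasDerivAt (fun s => δξ s ⬝ᵥ (pullbackMetric Θ G φ (ξ s)).mulVec (δξ s)) D t →
          D ≤ -lam * (δξ t ⬝ᵥ (pullbackMetric Θ G φ (ξ t)).mulVec (δξ t))) := by
  have hinj : ∀ x, Function.Injective ((Θ x).mulVec) := by
    intro x
    have hΨ : HasFDerivAt φinv (fderiv ℝ φinv (φ x)) (φ x) :=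
      (hφinv.differentiable (by simp) (φ x)).hasFDerivAt
    have hcomp : HasFDerivAt (φinv ∘ φ)
        ((fderiv ℝ φinv (φ x)).comp (LinearMap.toContinuousLinearMap (Θ x).mulVecLin)) x :=
      hΨ.comp x (hΘ x)
    have hid : (φinv ∘ φ) = id := funext hleft
    rw [hid] at hcomp
    have huniq := hcomp.unique (hasFDerivAt_id x)
    intro v w hvw
    have h1 := congrFun (congrArg (fun (L : (Fin n → ℝ) →L[ℝ] (Fin n → ℝ)) => (L : _ → _)) huniq) v
    have h2 := congrFun (congrArg (fun (L : (Fin n → ℝ) →L[ℝ] (Fin n → ℝ)) => (L : _ → _)) huniq) w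
    simp only [ContinuousLinearMap.coe_comp', Function.comp_apply,
      LinearMap.coe_toContinuousLinearMap', Matrix.mulVecLin_apply,
      ContinuousLinearMap.coe_id', id_eq] at h1 h2
    rw [← h1, ← h2, hvw]
  have hquad : ∀ (x : Fin n → ℝ) (M : Matrix (Fin n) (Fin n) ℝ) (X : Fin n → ℝ),
      X ⬝ᵥ ((Θ x)ᵀ * M * Θ x).mulVec X
        = ((Θ x).mulVec X) ⬝ᵥ M.mulVec ((Θ x).mulVec X) := by
    intro x M X
    rw [mul_assoc, dot_trans, ← Matrix.mulVec_mulVec]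
  have hpos : ∀ x, (pullbackMetric Θ G φ x).PosDef := by
    intro x
    rw [Matrix.posDef_iff_dotProduct_mulVec]
    constructor
    · have hG := (hGpos (φ x)).1
      show ((Θ x)ᵀ * G (φ x) * Θ x)ᴴ = (Θ x)ᵀ * G (φ x) * Θ x
      calc ((Θ x)ᵀ * G (φ x) * Θ x)ᴴ
          = (Θ x)ᴴ * ((G (φ x))ᴴ * ((Θ x)ᵀ)ᴴ) := by
            rw [Matrix.conjTranspose_mul, Matrix.conjTranspose_mul]
        _ = (Θ x)ᵀ * G (φ x) * Θ x := by
            rw [hG.eq]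
            ext i j
            simp [Matrix.conjTranspose_apply, Matrix.mul_assoc]
    · intro X hX
      have hv : (Θ x).mulVec X ≠ 0 := by
        intro h
        exact hX (hinj x (h.trans (Matrix.mulVec_zero (Θ x)).symm))
      have hp := (Matrix.posDef_iff_dotProduct_mulVec.mp (hGpos (φ x))).2 hv
      have : star X ⬝ᵥ (pullbackMetric Θ G φ x).mulVec X
          = star ((Θ x).mulVec X) ⬝ᵥ (G (φ x)).mulVec ((Θ x).mulVec X) := by
        simp only [star_trivial]
        exact hquad x (G (φ x)) X
      rw [this]; exact hp
  obtain ⟨Dfun, hDprop⟩ := Classical.axiomOfChoice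
    (fun x => key_deriv f f' φ hφ Θ hΘ hpush A A' hA hA' G GD hGD x)
  have hDfun : ∀ x, HasFDerivAt (pullbackMetric Θ G φ) (Dfun x) x := fun x => (hDprop x).1
  have part2 : ∀ GpD : (Fin n → ℝ) → ((Fin n → ℝ) →L[ℝ] Matrix (Fin n) (Fin n) ℝ),
      (∀ x, HasFDerivAt (pullbackMetric Θ G φ) (GpD x) x) →
      ∀ (x : Fin n → ℝ) (u : U) (X : Fin n → ℝ),
        X ⬝ᵥ (((A x u)ᵀ * pullbackMetric Θ G φ x + pullbackMetric Θ G φ x * A x u +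
            GpD x (f x u)).mulVec X) ≤
          -lam * (X ⬝ᵥ (pullbackMetric Θ G φ x).mulVec X) := by
    intro GpD hGpD x u X
    have hEq : GpD x = Dfun x := (hGpD x).unique (hDfun x)
    have hRHS : X ⬝ᵥ (pullbackMetric Θ G φ x).mulVec X
        = ((Θ x).mulVec X) ⬝ᵥ (G (φ x)).mulVec ((Θ x).mulVec X) := hquad x (G (φ x)) X
    rw [hEq, (hDprop x).2 u X, hRHS]
    exact hcontr (φ x) u ((Θ x).mulVec X)
  refine ⟨hpos, part2, ?_⟩
  intro ξ δξ υ hξ hδξ t D hD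
  set x := ξ t with hx
  set u := υ t with hu
  set Xv := δξ t with hXv
  have h1 : HasDerivAt (fun s => pullbackMetric Θ G φ (ξ s)) (Dfun x (f x u)) t :=
    (hDfun x).comp_hasDerivAt t (hξ t)
  have h2 : HasDerivAt (fun s => mulVecL n (pullbackMetric Θ G φ (ξ s)))
      (mulVecL n (Dfun x (f x u))) t :=
    (mulVecL n).hasFDerivAt.comp_hasDerivAt t h1
  have h3 : HasDerivAt (fun s => (mulVecL n (pullbackMetric Θ G φ (ξ s))) (δξ s))
      (mulVecL n (Dfun x (f x u)) Xv +
        mulVecL n (pullbackMetric Θ G φ x) ((A x u).mulVec Xv)) t :=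
    h2.clm_apply (hδξ t)
  have h4 : HasDerivAt (fun s => dotL n (δξ s)) (dotL n ((A x u).mulVec Xv)) t :=
    (dotL n).hasFDerivAt.comp_hasDerivAt t (hδξ t)
  have h5 := h4.clm_apply h3
  have hD5 : HasDerivAt (fun s => δξ s ⬝ᵥ (pullbackMetric Θ G φ (ξ s)).mulVec (δξ s))
      (((A x u).mulVec Xv) ⬝ᵥ (pullbackMetric Θ G φ x).mulVec Xv +
        (Xv ⬝ᵥ ((Dfun x (f x u)).mulVec Xv +
          (pullbackMetric Θ G φ x).mulVec ((A x u).mulVec Xv)))) t := by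
    simpa using h5
  have hDval := hD.unique hD5
  have hsum : ((A x u).mulVec Xv) ⬝ᵥ (pullbackMetric Θ G φ x).mulVec Xv +
        (Xv ⬝ᵥ ((Dfun x (f x u)).mulVec Xv +
          (pullbackMetric Θ G φ x).mulVec ((A x u).mulVec Xv)))
      = Xv ⬝ᵥ (((A x u)ᵀ * pullbackMetric Θ G φ x + pullbackMetric Θ G φ x * A x u +
          Dfun x (f x u)).mulVec Xv) := by
    rw [← dot_trans (A x u) (pullbackMetric Θ G φ x) Xv Xv]
    simp only [Matrix.add_mulVec, dotProduct_add, Matrix.mulVec_mulVec]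
    ring
  rw [hDval, hsum]
  exact part2 Dfun hDfun x u Xv
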